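/- arXiv:2211.14810 — 5 statements merged into one kernel-verified Lean document; each statement's English description precedes it below -/
import Mathlib

section
/- Let A ∈ ℝ^{n×n} (n ≥ 2) be a symmetric positive semi-definite matrix with all diagonal entries equal to 1 and with ∑_{i≠j} A_{ij} ≥ 0. Let b = (1/(n(n-1))) ∑_{i≠j} A_{ij} and let B(A) = B_{1,b} be the double-constant matrix with diagonal 1 and off-diagonal b. Then ρ(B(A)) ≤ ρ(A), i.e., (1 + nb/(1-b)) ≤ λ_max(A)/λ_min(A) (assuming λ_min(A) > 0 and b < 1). -/
/-!
Testing the quadratic form of `A` against the all-ones vector shows that `λ_max(A)` is at least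
the mean row sum `1 + (n - 1) b`, and testing it against `eᵢ - eⱼ` shows that `λ_min(A) ≤ 1 - A i j`
for `i ≠ j`; averaging over the off-diagonal entries gives `λ_min(A) ≤ 1 - b`. Dividing the two
bounds yields `(1 + (n - 1) b) / (1 - b) = 1 + n b / (1 - b) ≤ λ_max(A) / λ_min(A)`.
-/

open Matrix Finset
open scoped MatrixOrder ComplexOrder

namespace Matrix.IsHermitian

section RCLike

variable {𝕜 n : Type*} [RCLike 𝕜] [Fintype n] [DecidableEq n] {A : Matrix n n 𝕜}

lemma posSemidef_smul_one_sub (hA : A.IsHermitian) {c : ℝ} (h : ∀ i, hA.eigenvalues i ≤ c) :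
    (c • 1 - A).PosSemidef := by
  have : A ≤ algebraMap ℝ _ c := le_algebraMap_of_spectrum_le (by
    rw [hA.spectrum_real_eq_range_eigenvalues]; rintro _ ⟨i, rfl⟩; exact h i) hA.isSelfAdjoint
  simpa [Matrix.le_iff, Algebra.algebraMap_eq_smul_one] using this

lemma posSemidef_sub_smul_one (hA : A.IsHermitian) {c : ℝ} (h : ∀ i, c ≤ hA.eigenvalues i) :
    (A - c • 1).PosSemidef := by
  have : algebraMap ℝ _ c ≤ A := algebraMap_le_of_le_spectrum (by
    rw [hA.spectrum_real_eq_range_eigenvalues]; rintro _ ⟨i, rfl⟩; exact h i) hA.isSelfAdjoint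
  simpa [Matrix.le_iff, Algebra.algebraMap_eq_smul_one] using this

end RCLike

variable {n : Type*} [Fintype n] [DecidableEq n] {A : Matrix n n ℝ}

lemma dotProduct_mulVec_le_iSup_eigenvalues_mul (hA : A.IsHermitian) (x : n → ℝ) :
    x ⬝ᵥ A *ᵥ x ≤ (⨆ i, hA.eigenvalues i) * (x ⬝ᵥ x) := by
  have := (hA.posSemidef_smul_one_sub
    fun i ↦ le_ciSup (Set.finite_range _).bddAbove i).dotProduct_mulVec_nonneg x
  simp only [star_trivial, sub_mulVec, smul_mulVec, one_mulVec, dotProduct_sub,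
    dotProduct_smul, smul_eq_mul] at this
  linarith

lemma iInf_eigenvalues_mul_le_dotProduct_mulVec (hA : A.IsHermitian) (x : n → ℝ) :
    (⨅ i, hA.eigenvalues i) * (x ⬝ᵥ x) ≤ x ⬝ᵥ A *ᵥ x := by
  have := (hA.posSemidef_sub_smul_one
    fun i ↦ ciInf_le (Set.finite_range _).bddBelow i).dotProduct_mulVec_nonneg x
  simp only [star_trivial, sub_mulVec, smul_mulVec, one_mulVec, dotProduct_sub,
    dotProduct_smul, smul_eq_mul] at this
  linarith

lemma sum_sum_le_iSup_eigenvalues_mul_card (hA : A.IsHermitian) :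
    ∑ i, ∑ j, A i j ≤ (⨆ i, hA.eigenvalues i) * Fintype.card n := by
  simpa [one_dotProduct, mulVec, dotProduct] using hA.dotProduct_mulVec_le_iSup_eigenvalues_mul 1

lemma iInf_eigenvalues_le_of_ne (hA : A.IsHermitian) {i j : n} (hij : i ≠ j) :
    ⨅ k, hA.eigenvalues k ≤ (A i i + A j j) / 2 - A i j := by
  have := hA.iInf_eigenvalues_mul_le_dotProduct_mulVec (Pi.single i 1 - Pi.single j 1)
  have hji : A j i = A i j := hA.apply i j
  simp [mulVec_sub, hij, hij.symm, hji] at this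
  linarith

end Matrix.IsHermitian

namespace Matrix

variable {n : Type*} [Fintype n] [DecidableEq n] {A : Matrix n n ℝ}

lemma sum_sum_eq_card_add_sum_offDiag (hdiag : ∀ i, A i i = 1) :
    ∑ i, ∑ j, A i j = Fintype.card n + ∑ i, ∑ j ∈ univ \ {i}, A i j := by
  calc ∑ i, ∑ j, A i j = ∑ i, (A i i + ∑ j ∈ univ \ {i}, A i j) :=
        sum_congr rfl fun i _ ↦ sum_eq_add_sum_sdiff_singleton_of_mem (mem_univ i) _
    _ = Fintype.card n + ∑ i, ∑ j ∈ univ \ {i}, A i j := by simp [hdiag]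

lemma sum_offDiag_le_of_le {c : ℝ} (h : ∀ i j, i ≠ j → A i j ≤ c) :
    ∑ i, ∑ j ∈ univ \ {i}, A i j ≤ Fintype.card n * (Fintype.card n - 1) * c := by
  calc ∑ i, ∑ j ∈ univ \ {i}, A i j ≤ ∑ i : n, ∑ _j ∈ univ \ {i}, c :=
        sum_le_sum fun i _ ↦ sum_le_sum fun j hj ↦ h i j (by simpa [eq_comm] using hj)
    _ = Fintype.card n * (Fintype.card n - 1) * c := by
        rcases isEmpty_or_nonempty n with _ | _ <;>
          simp [card_sdiff, Nat.cast_sub Fintype.card_pos, mul_assoc]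

end Matrix

theorem stmt2_general (n : ℕ) (hn : 2 ≤ n) (A : Matrix (Fin n) (Fin n) ℝ)
    (hA : A.PosSemidef) (hdiag : ∀ i, A i i = 1)
    (b : ℝ) (hb : b = (1 / ((n : ℝ) * ((n : ℝ) - 1))) * ∑ i, ∑ j ∈ Finset.univ \ {i}, A i j)
    (hb1 : b < 1)
    (hmin : 0 < ⨅ i, hA.1.eigenvalues i) :
    1 + (n : ℝ) * b / (1 - b) ≤ (⨆ i, hA.1.eigenvalues i) / (⨅ i, hA.1.eigenvalues i) := by
  set μ := ⨅ i, hA.1.eigenvalues i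
  set M := ⨆ i, hA.1.eigenvalues i
  have hn1 : (1 : ℝ) < n := by exact_mod_cast hn
  have hsum : ∑ i, ∑ j ∈ univ \ {i}, A i j = n * (n - 1) * b := by
    have : (n : ℝ) - 1 ≠ 0 := by linarith
    rw [hb]; field_simp
  have hM : 1 + (n - 1) * b ≤ M := by
    have := hA.1.sum_sum_le_iSup_eigenvalues_mul_card
    rw [sum_sum_eq_card_add_sum_offDiag hdiag, hsum, Fintype.card_fin] at this
    nlinarith
  have hμ : μ ≤ 1 - b := by
    have := sum_offDiag_le_of_le (c := 1 - μ) fun i j hij ↦ by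
      have := hA.1.iInf_eigenvalues_le_of_ne hij
      rw [hdiag, hdiag] at this
      linarith
    rw [hsum, Fintype.card_fin] at this
    have hpos : (0 : ℝ) < n * (n - 1) := by nlinarith
    linarith [le_of_mul_le_mul_left this hpos]
  have hM0 : 0 ≤ M := Real.iSup_nonneg hA.eigenvalues_nonneg
  calc 1 + (n : ℝ) * b / (1 - b) = (1 + (n - 1) * b) / (1 - b) := by
        field_simp [(sub_pos.2 hb1).ne']; ring
    _ ≤ M / (1 - b) := by gcongr
    _ ≤ M / μ := by gcongr

/-- Lower bound on the condition number of a normalized PSD kernel matrix by the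
condition number of its associated double-constant matrix:
`ρ(B(A)) = 1 + n b/(1-b) ≤ ρ(A) = λ_max(A)/λ_min(A)`. -/
theorem stmt2 (n : ℕ) [NeZero n] (hn : 2 ≤ n) (A : Matrix (Fin n) (Fin n) ℝ)
    (hA : A.PosSemidef) (hdiag : ∀ i, A i i = 1)
    (hoff : 0 ≤ ∑ i, ∑ j ∈ Finset.univ \ {i}, A i j)
    (b : ℝ) (hb : b = (1 / ((n : ℝ) * ((n : ℝ) - 1))) * ∑ i, ∑ j ∈ Finset.univ \ {i}, A i j)
    (hb1 : b < 1)
    (hmin : 0 < ⨅ i, hA.1.eigenvalues i) :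
    1 + (n : ℝ) * b / (1 - b) ≤ (⨆ i, hA.1.eigenvalues i) / (⨅ i, hA.1.eigenvalues i) :=
  stmt2_general n hn A hA hdiag b hb hb1 hmin
end

section
/- The arc-cosine kernel of degree one, κ₁(u) = (√(1-u²) + (π - arccos(u))·u)/π, satisfies κ₁(u) > u for all u ∈ [-1, 1), and κ₁(1) = 1. -/
/-- The degree-one arc-cosine kernel. -/
noncomputable def kappa1 (u : ℝ) : ℝ :=
  (Real.sqrt (1 - u ^ 2) + (Real.pi - Real.arccos u) * u) / Real.pi

/-- `κ₁(u) > u` for all `u ∈ [-1, 1)`, and `κ₁(1) = 1`. -/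
theorem stmt4 : (∀ u ∈ Set.Ico (-1 : ℝ) 1, u < kappa1 u) ∧ kappa1 1 = 1 := by
  constructor
  · intro u hu
    obtain ⟨h1, h2⟩ := hu
    have hπ : (0:ℝ) < Real.pi := Real.pi_pos
    have key : u * Real.arccos u < Real.sqrt (1 - u ^ 2) := by
      rcases le_or_gt u 0 with h0 | h0
      · rcases eq_or_lt_of_le h0 with h0' | h0'
        · subst h0'
          simpa using (by norm_num : (0:ℝ) < Real.sqrt 1)
        · have ha : 0 < Real.arccos u := Real.arccos_pos.mpr h2
          have : u * Real.arccos u < 0 := mul_neg_of_neg_of_pos h0' ha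
          exact this.trans_le (Real.sqrt_nonneg _)
      · set θ := Real.arccos u with hθ
        have hθpos : 0 < θ := Real.arccos_pos.mpr h2
        have hθlt : θ < Real.pi / 2 := Real.arccos_lt_pi_div_two.mpr h0
        have hcos : Real.cos θ = u := Real.cos_arccos h1 h2.le
        have hsin : Real.sin θ = Real.sqrt (1 - u ^ 2) := by
          rw [hθ, Real.sin_arccos]
        have htan : θ < Real.tan θ := Real.lt_tan hθpos hθlt
        have : θ * Real.cos θ < Real.tan θ * Real.cos θ := by
          apply mul_lt_mul_of_pos_right htan
          rw [hcos]; exact h0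
        rw [Real.tan_eq_sin_div_cos, div_mul_cancel₀] at this
        · rw [hcos, hsin] at this; linarith
        · rw [hcos]; exact ne_of_gt h0
    have : u < (Real.sqrt (1 - u ^ 2) + (Real.pi - Real.arccos u) * u) / Real.pi := by
      rw [lt_div_iff₀ hπ]
      nlinarith
    exact this
  · simp [kappa1, Real.arccos_one, Real.pi_ne_zero]
end

section
/- The arc-cosine kernel κ₁ is convex on [-1, 1]. -/
lemma kappa1_hasDerivAt {u : ℝ} (hu : u ∈ Set.Ioo (-1 : ℝ) 1) :
    HasDerivAt kappa1 ((Real.pi - Real.arccos u) / Real.pi) u := by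
  obtain ⟨h1, h2⟩ := hu
  have hpos : (0 : ℝ) < 1 - u ^ 2 := by nlinarith
  have hs : Real.sqrt (1 - u ^ 2) ≠ 0 := by positivity
  have hsq : HasDerivAt (fun u : ℝ => Real.sqrt (1 - u ^ 2))
      ((-(2 * u)) / (2 * Real.sqrt (1 - u ^ 2))) u := by
    have : HasDerivAt (fun u : ℝ => 1 - u ^ 2) (-(2 * u)) u := by
      simpa using ((hasDerivAt_pow 2 u).const_sub 1)
    exact this.sqrt (by positivity)
  have harc : HasDerivAt (fun u : ℝ => (Real.pi - Real.arccos u) * u)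
      ((1 / Real.sqrt (1 - u ^ 2)) * u + (Real.pi - Real.arccos u) * 1) u := by
    have ha : HasDerivAt (fun u : ℝ => Real.pi - Real.arccos u)
        (1 / Real.sqrt (1 - u ^ 2)) u := by
      simpa using (Real.hasDerivAt_arccos (by linarith) (by linarith)).const_sub Real.pi
    exact ha.mul (hasDerivAt_id u)
  have h := (hsq.add harc).div_const Real.pi
  have heq : ((-(2 * u)) / (2 * Real.sqrt (1 - u ^ 2)) +
      ((1 / Real.sqrt (1 - u ^ 2)) * u + (Real.pi - Real.arccos u) * 1)) / Real.pi
      = (Real.pi - Real.arccos u) / Real.pi := by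
    field_simp
    ring
  rw [heq] at h
  exact h

/-- The arc-cosine kernel `κ₁` is convex on `[-1, 1]`. -/
theorem stmt7 : ConvexOn ℝ (Set.Icc (-1 : ℝ) 1) kappa1 := by
  have hint : interior (Set.Icc (-1 : ℝ) 1) = Set.Ioo (-1 : ℝ) 1 := interior_Icc
  apply MonotoneOn.convexOn_of_deriv (convex_Icc _ _)
  · have : Continuous kappa1 := by
      unfold kappa1
      exact ((Real.continuous_sqrt.comp (by continuity)).add
        (((continuous_const.sub Real.continuous_arccos)).mul continuous_id)).div_const _
    exact this.continuousOn
  · rw [hint]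
    intro x hx
    exact (kappa1_hasDerivAt hx).differentiableAt.differentiableWithinAt
  · rw [hint]
    intro x hx y hy hxy
    rw [(kappa1_hasDerivAt hx).deriv, (kappa1_hasDerivAt hy).deriv]
    have : Real.arccos y ≤ Real.arccos x := by
      rcases eq_or_lt_of_le hxy with rfl | h
      · exact le_refl _
      · exact le_of_lt (Real.strictAntiOn_arccos ⟨le_of_lt hx.1, le_of_lt hx.2⟩
          ⟨le_of_lt hy.1, le_of_lt hy.2⟩ h)
    have hpi := Real.pi_pos
    exact div_le_div_of_nonneg_right (by linarith) hpi.le |>.trans_eq rfl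
end

section
/- Let α > 0 and define a sequence (a_L) in [-1,1] satisfying a_{L} ≥ a_{L-1} + (α²/(1+α²))·(κ₁(a_{L-1}) - a_{L-1}) for all L ≥ 1, where κ₁ is the degree-one arc-cosine kernel. Then a_L → 1 as L → ∞. -/
lemma sin_gt_mul_cos {θ : ℝ} (h0 : 0 < θ) (h1 : θ ≤ Real.pi) :
    θ * Real.cos θ < Real.sin θ := by
  rcases lt_or_eq_of_le h1 with h1 | h1
  · have hs : 0 < Real.sin θ := Real.sin_pos_of_pos_of_lt_pi h0 h1
    rcases le_or_gt (Real.cos θ) 0 with hc | hc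
    · calc θ * Real.cos θ ≤ 0 := mul_nonpos_of_nonneg_of_nonpos h0.le hc
        _ < Real.sin θ := hs
    · have hθ : θ < Real.pi / 2 := by
        by_contra h
        push_neg at h
        have := Real.cos_nonpos_of_pi_div_two_le_of_le h
          (by linarith [Real.pi_pos])
        linarith
      have ht : θ < Real.tan θ := Real.lt_tan h0 hθ
      have : θ * Real.cos θ < Real.tan θ * Real.cos θ := by
        exact mul_lt_mul_of_pos_right ht hc
      rwa [Real.tan_eq_sin_div_cos, div_mul_cancel₀ _ (ne_of_gt hc)] at this
  · subst h1
    simp [Real.sin_pi]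
    nlinarith [Real.pi_pos]

lemma kappa1_gt {u : ℝ} (h1 : -1 ≤ u) (h2 : u < 1) : u < kappa1 u := by
  have hpi := Real.pi_pos
  set θ := Real.arccos u with hθ
  have hcos : Real.cos θ = u := Real.cos_arccos h1 h2.le
  have hsin : Real.sin θ = Real.sqrt (1 - u ^ 2) := by
    rw [hθ, Real.sin_arccos]
  have hθpos : 0 < θ := Real.arccos_pos.mpr h2
  have hθle : θ ≤ Real.pi := Real.arccos_le_pi u
  have key := sin_gt_mul_cos hθpos hθle
  rw [hcos, hsin] at key
  unfold kappa1
  rw [lt_div_iff₀ hpi]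
  nlinarith

lemma kappa1_one : kappa1 1 = 1 := by
  unfold kappa1
  simp [Real.arccos_one, Real.pi_ne_zero]

lemma kappa1_ge {u : ℝ} (h1 : -1 ≤ u) (h2 : u ≤ 1) : u ≤ kappa1 u := by
  rcases lt_or_eq_of_le h2 with h | h
  · exact (kappa1_gt h1 h).le
  · rw [h, kappa1_one]

lemma kappa1_continuous : Continuous kappa1 := by
  unfold kappa1
  have : Continuous fun u : ℝ =>
      Real.sqrt (1 - u ^ 2) + (Real.pi - Real.arccos u) * u := by
    continuity
  exact this.div_const _

/-- A sequence in `[-1,1]` satisfying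
`a_L ≥ a_{L-1} + (α²/(1+α²))·(κ₁(a_{L-1}) - a_{L-1})` converges to `1`. -/
theorem stmt8 (α : ℝ) (hα : 0 < α) (a : ℕ → ℝ)
    (hmem : ∀ L, a L ∈ Set.Icc (-1 : ℝ) 1)
    (hrec : ∀ L : ℕ, a L + (α ^ 2 / (1 + α ^ 2)) * (kappa1 (a L) - a L) ≤ a (L + 1)) :
    Filter.Tendsto a Filter.atTop (nhds 1) := by
  set c : ℝ := α ^ 2 / (1 + α ^ 2) with hc
  have hcpos : 0 < c := by positivity
  have hmono : Monotone a := by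
    apply monotone_nat_of_le_succ
    intro n
    have hk := kappa1_ge (hmem n).1 (hmem n).2
    have := hrec n
    nlinarith
  have hbdd : BddAbove (Set.range a) := by
    refine ⟨1, ?_⟩
    rintro x ⟨n, rfl⟩
    exact (hmem n).2
  set ℓ : ℝ := ⨆ n, a n with hℓ
  have htend : Filter.Tendsto a Filter.atTop (nhds ℓ) :=
    tendsto_atTop_ciSup hmono hbdd
  have hℓ1 : ℓ ≤ 1 := ciSup_le fun n => (hmem n).2
  have hℓm1 : -1 ≤ ℓ := le_trans (hmem 0).1 (le_ciSup hbdd 0)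
  -- the limit satisfies kappa1 ℓ ≤ ℓ
  have hcont : Continuous fun u : ℝ => u + c * (kappa1 u - u) := by
    have := kappa1_continuous
    continuity
  have h1 : Filter.Tendsto (fun L => a L + c * (kappa1 (a L) - a L))
      Filter.atTop (nhds (ℓ + c * (kappa1 ℓ - ℓ))) :=
    (hcont.tendsto ℓ).comp htend
  have h2 : Filter.Tendsto (fun L => a (L + 1)) Filter.atTop (nhds ℓ) :=
    htend.comp (Filter.tendsto_add_atTop_nat 1)
  have hle : ℓ + c * (kappa1 ℓ - ℓ) ≤ ℓ :=
    le_of_tendsto_of_tendsto' h1 h2 hrec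
  have hkle : kappa1 ℓ ≤ ℓ := by nlinarith
  have hℓeq : ℓ = 1 := by
    by_contra h
    have hlt : ℓ < 1 := lt_of_le_of_ne hℓ1 h
    exact absurd hkle (not_le.mpr (kappa1_gt hℓm1 hlt))
  rw [← hℓeq]
  exact htend
end

section
/- Define f₀(t) = 1 - t and f_L(t) = (1/(1+α²))(f_{L-1}(t) + α²·κ₁(f_{L-1}(t))) for fixed α > 0, and write f_L(1-t) for the L-fold recursion applied starting from u = 1-t. Then for every L ≥ 1, as t ↘ 0, f_L(1-t) = 1 - t + Θ(t^{3/2}); that is, there exist constants 0 < c ≤ C and δ > 0 such that c·t^{3/2} ≤ f_L(1-t) - (1 - t) ≤ C·t^{3/2} for 0 < t < δ (for L = 0 the difference is 0). -/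
open Real

lemma arccos_lb' {t : ℝ} (ht : 0 ≤ t) (ht1 : t ≤ 2) :
    Real.sqrt 2 * Real.sqrt t ≤ Real.arccos (1 - t) := by
  have h1 : (-1:ℝ) ≤ 1 - t := by linarith
  have h2 : (1:ℝ) - t ≤ 1 := by linarith
  have hc : Real.cos (Real.arccos (1 - t)) = 1 - t := Real.cos_arccos h1 h2
  have hb := Real.one_sub_sq_div_two_le_cos (x := Real.arccos (1 - t))
  have hθ : 0 ≤ Real.arccos (1 - t) := Real.arccos_nonneg _
  have h2t : 2 * t ≤ (Real.arccos (1 - t)) ^ 2 := by nlinarith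
  calc Real.sqrt 2 * Real.sqrt t = Real.sqrt (2 * t) := (Real.sqrt_mul (by norm_num) t).symm
    _ ≤ Real.sqrt ((Real.arccos (1 - t)) ^ 2) := Real.sqrt_le_sqrt h2t
    _ = Real.arccos (1 - t) := Real.sqrt_sq hθ

lemma arccos_ub' {t : ℝ} (ht : 0 ≤ t) (ht1 : t ≤ 1) :
    Real.arccos (1 - t) ≤ (Real.pi / 2) * (Real.sqrt 2 * Real.sqrt t) := by
  set θ := Real.arccos (1 - t) with hθdef
  have hθ0 : 0 ≤ θ := Real.arccos_nonneg _
  have hθπ : θ ≤ Real.pi / 2 := Real.arccos_le_pi_div_two.2 (by linarith)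
  have hsin := Real.mul_le_sin hθ0 hθπ
  have hs : Real.sin θ = Real.sqrt (1 - (1 - t) ^ 2) := Real.sin_arccos _
  have h1 : 1 - (1 - t) ^ 2 ≤ 2 * t := by nlinarith
  have h2 : Real.sqrt (1 - (1 - t) ^ 2) ≤ Real.sqrt (2 * t) := Real.sqrt_le_sqrt h1
  have hπ : 0 < Real.pi := Real.pi_pos
  have key : θ ≤ Real.pi / 2 * Real.sin θ := by
    have := mul_le_mul_of_nonneg_left hsin (by positivity : (0:ℝ) ≤ Real.pi / 2)
    calc θ = Real.pi / 2 * (2 / Real.pi * θ) := by field_simp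
      _ ≤ Real.pi / 2 * Real.sin θ := this
  calc θ ≤ Real.pi / 2 * Real.sin θ := key
    _ = Real.pi / 2 * Real.sqrt (1 - (1 - t) ^ 2) := by rw [hs]
    _ ≤ Real.pi / 2 * Real.sqrt (2 * t) := by
        exact mul_le_mul_of_nonneg_left h2 (by positivity)
    _ = Real.pi / 2 * (Real.sqrt 2 * Real.sqrt t) := by rw [Real.sqrt_mul (by norm_num)]

noncomputable def Haux (t : ℝ) : ℝ :=
  Real.sqrt (1 - (1 - t) ^ 2) - (1 - t) * Real.arccos (1 - t)

lemma Haux_hasDeriv {t : ℝ} (h0 : 0 < t) (h1 : t < 1) :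
    HasDerivAt Haux (Real.arccos (1 - t)) t := by
  have hu0 : (0:ℝ) < 1 - t := by linarith
  have hsq : (0:ℝ) < 1 - (1 - t) ^ 2 := by nlinarith
  have hsqrt : Real.sqrt (1 - (1 - t) ^ 2) ≠ 0 := (Real.sqrt_pos.2 hsq).ne'
  have hid : HasDerivAt (fun x : ℝ => 1 - x) (-1) t := (hasDerivAt_id t).const_sub 1
  have hinner : HasDerivAt (fun x : ℝ => 1 - (1 - x) ^ 2) (2 * (1 - t)) t := by
    have h := (hid.fun_pow 2).const_sub 1
    refine h.congr_deriv ?_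
    norm_num
  have hsq' : HasDerivAt (fun x : ℝ => Real.sqrt (1 - (1 - x) ^ 2))
      ((2 * (1 - t)) / (2 * Real.sqrt (1 - (1 - t) ^ 2))) t := hinner.sqrt hsq.ne'
  have harc : HasDerivAt (fun x : ℝ => Real.arccos (1 - x))
      ((-(1 / Real.sqrt (1 - (1 - t) ^ 2))) * (-1)) t := by
    exact (Real.hasDerivAt_arccos (by linarith) (by linarith)).comp t hid
  have hprod := hid.mul harc
  have hfin := hsq'.sub hprod
  refine hfin.congr_deriv ?_
  field_simp
  ring

lemma Haux_zero : Haux 0 = 0 := by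
  simp [Haux, Real.arccos_one]

lemma rpow32_hasDeriv (c : ℝ) (t : ℝ) :
    HasDerivAt (fun x : ℝ => c * x ^ ((3:ℝ)/2)) (c * ((3:ℝ)/2) * t ^ ((1:ℝ)/2)) t := by
  have h := (Real.hasDerivAt_rpow_const (x := t) (p := (3:ℝ)/2) (Or.inr (by norm_num))).const_mul c
  refine h.congr_deriv ?_
  norm_num
  ring

lemma Haux_lb {t : ℝ} (h0 : 0 < t) (h1 : t ≤ 1/2) :
    (2 * Real.sqrt 2 / 3) * t ^ ((3:ℝ)/2) ≤ Haux t := by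
  set c : ℝ := 2 * Real.sqrt 2 / 3 with hc
  have key : MonotoneOn (fun x => Haux x - c * x ^ ((3:ℝ)/2)) (Set.Icc 0 (1/2)) := by
    apply monotoneOn_of_deriv_nonneg (convex_Icc _ _)
    · apply ContinuousOn.sub
      · apply Continuous.continuousOn
        unfold Haux
        exact (Real.continuous_sqrt.comp (by fun_prop)).sub
          ((continuous_const.sub continuous_id).mul
            (Real.continuous_arccos.comp (continuous_const.sub continuous_id)))
      · intro x hx
        exact (Real.continuousAt_rpow_const x _ (Or.inr (by norm_num))).const_smul c |>.continuousWithinAt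
    · intro x hx
      rw [interior_Icc] at hx
      exact ((Haux_hasDeriv hx.1 (by linarith [hx.2])).sub (rpow32_hasDeriv c x)).differentiableAt.differentiableWithinAt
    · intro x hx
      rw [interior_Icc] at hx
      have hd := ((Haux_hasDeriv hx.1 (by linarith [hx.2])).sub (rpow32_hasDeriv c x)).deriv
      rw [show (fun x => Haux x - c * x ^ ((3:ℝ)/2)) = Haux - fun x => c * x ^ ((3:ℝ)/2) from rfl, hd]
      have hlb := arccos_lb' hx.1.le (by linarith [hx.2])
      have hx12 : x ^ ((1:ℝ)/2) = Real.sqrt x := (Real.sqrt_eq_rpow x).symm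
      rw [hx12]
      have : c * (3/2) = Real.sqrt 2 := by rw [hc]; ring
      rw [this]
      linarith
  have h2 := key (Set.mem_Icc.2 ⟨le_refl 0, by norm_num⟩) (Set.mem_Icc.2 ⟨h0.le, h1⟩) h0.le
  simp only [Haux_zero] at h2
  rw [Real.zero_rpow (by norm_num)] at h2
  simpa using h2

lemma Haux_ub {t : ℝ} (h0 : 0 < t) (h1 : t ≤ 1/2) :
    Haux t ≤ (Real.pi * Real.sqrt 2 / 3) * t ^ ((3:ℝ)/2) := by
  set c : ℝ := Real.pi * Real.sqrt 2 / 3 with hc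
  have key : MonotoneOn (fun x => c * x ^ ((3:ℝ)/2) - Haux x) (Set.Icc 0 (1/2)) := by
    apply monotoneOn_of_deriv_nonneg (convex_Icc _ _)
    · apply ContinuousOn.sub
      · intro x hx
        exact (Real.continuousAt_rpow_const x _ (Or.inr (by norm_num))).const_smul c |>.continuousWithinAt
      · apply Continuous.continuousOn
        unfold Haux
        exact (Real.continuous_sqrt.comp (by fun_prop)).sub
          ((continuous_const.sub continuous_id).mul
            (Real.continuous_arccos.comp (continuous_const.sub continuous_id)))
    · intro x hx
      rw [interior_Icc] at hx
      exact ((rpow32_hasDeriv c x).sub (Haux_hasDeriv hx.1 (by linarith [hx.2]))).differentiableAt.differentiableWithinAt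
    · intro x hx
      rw [interior_Icc] at hx
      have hd := ((rpow32_hasDeriv c x).sub (Haux_hasDeriv hx.1 (by linarith [hx.2]))).deriv
      rw [show (fun x => c * x ^ ((3:ℝ)/2) - Haux x) = (fun x => c * x ^ ((3:ℝ)/2)) - Haux from rfl, hd]
      have hub := arccos_ub' hx.1.le (by linarith [hx.2])
      have hx12 : x ^ ((1:ℝ)/2) = Real.sqrt x := (Real.sqrt_eq_rpow x).symm
      rw [hx12]
      have : c * (3/2) = Real.pi / 2 * Real.sqrt 2 := by rw [hc]; ring
      rw [this]
      nlinarith [Real.sqrt_nonneg x]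
  have h2 := key (Set.mem_Icc.2 ⟨le_refl 0, by norm_num⟩) (Set.mem_Icc.2 ⟨h0.le, h1⟩) h0.le
  simp only [Haux_zero] at h2
  rw [Real.zero_rpow (by norm_num)] at h2
  simpa using h2

/-- The normalized fully-connected residual GPK recursion evaluated at input `1 - t`:
`f₀(t) = 1 - t`, `f_L(t) = (1/(1+α²))(f_{L-1}(t) + α² κ₁(f_{L-1}(t)))`. -/
noncomputable def fcRes (α : ℝ) : ℕ → ℝ → ℝ
  | 0, t => 1 - t
  | (L + 1), t => (1 / (1 + α ^ 2)) * (fcRes α L t + α ^ 2 * kappa1 (fcRes α L t))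

lemma kappa_bounds {s : ℝ} (h0 : 0 < s) (h1 : s ≤ 1/2) :
    (2 * Real.sqrt 2 / (3 * Real.pi)) * s ^ ((3:ℝ)/2) ≤ kappa1 (1 - s) - (1 - s) ∧
    kappa1 (1 - s) - (1 - s) ≤ (Real.sqrt 2 / 3) * s ^ ((3:ℝ)/2) := by
  have hπ : 0 < Real.pi := Real.pi_pos
  have hk : kappa1 (1 - s) - (1 - s) = Haux s / Real.pi := by
    unfold kappa1 Haux
    field_simp
    ring
  rw [hk]
  constructor
  · rw [le_div_iff₀ hπ]
    have h := Haux_lb h0 h1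
    have heq : 2 * Real.sqrt 2 / (3 * Real.pi) * s ^ ((3:ℝ)/2) * Real.pi
        = 2 * Real.sqrt 2 / 3 * s ^ ((3:ℝ)/2) := by field_simp
    rw [heq]; exact h
  · rw [div_le_iff₀ hπ]
    have h := Haux_ub h0 h1
    have heq : Real.sqrt 2 / 3 * s ^ ((3:ℝ)/2) * Real.pi
        = Real.pi * Real.sqrt 2 / 3 * s ^ ((3:ℝ)/2) := by ring
    rw [heq]; exact h

/-- For `L ≥ 1`, `f_L(1-t) = 1 - t + Θ(t^{3/2})` as `t ↘ 0`; for `L = 0` the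
difference is `0`. -/
theorem stmt10 (α : ℝ) (hα : 0 < α) :
    (∀ t : ℝ, fcRes α 0 t - (1 - t) = 0) ∧
    ∀ L : ℕ, 1 ≤ L → ∃ c C δ : ℝ, 0 < c ∧ c ≤ C ∧ 0 < δ ∧
      ∀ t : ℝ, 0 < t → t < δ →
        c * t ^ ((3 : ℝ) / 2) ≤ fcRes α L t - (1 - t) ∧
        fcRes α L t - (1 - t) ≤ C * t ^ ((3 : ℝ) / 2) := by
  have hα2 : (0:ℝ) < 1 + α ^ 2 := by positivity
  have hβ : 0 < α ^ 2 / (1 + α ^ 2) := by positivity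
  have hs2 : (0:ℝ) < Real.sqrt 2 := by positivity
  have hπ : 0 < Real.pi := Real.pi_pos
  have hc0C0 : 2 * Real.sqrt 2 / (3 * Real.pi) ≤ Real.sqrt 2 / 3 := by
    rw [div_le_div_iff₀ (by positivity) (by norm_num)]
    nlinarith [Real.pi_gt_three]
  constructor
  · intro t; simp [fcRes]
  · have main : ∀ L : ℕ, 1 ≤ L → ∃ c C δ : ℝ, 0 < c ∧ c ≤ C ∧ 0 < δ ∧ δ ≤ 1/2 ∧
        ∀ t : ℝ, 0 < t → t < δ →
          c * t ^ ((3 : ℝ) / 2) ≤ fcRes α L t - (1 - t) ∧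
          fcRes α L t - (1 - t) ≤ C * t ^ ((3 : ℝ) / 2) := by
      intro L hL
      induction L, hL using Nat.le_induction with
      | base =>
        refine ⟨α ^ 2 / (1 + α ^ 2) * (2 * Real.sqrt 2 / (3 * Real.pi)),
          α ^ 2 / (1 + α ^ 2) * (Real.sqrt 2 / 3), 1/2, by positivity,
          mul_le_mul_of_nonneg_left hc0C0 hβ.le, by norm_num, le_refl _, ?_⟩
        intro t ht htδ
        have hkey : fcRes α 1 t - (1 - t)
            = α ^ 2 / (1 + α ^ 2) * (kappa1 (1 - t) - (1 - t)) := by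
          simp only [fcRes]
          field_simp
          ring
        obtain ⟨hk1, hk2⟩ := kappa_bounds ht (le_of_lt htδ)
        constructor
        · rw [hkey, mul_assoc]
          exact mul_le_mul_of_nonneg_left hk1 hβ.le
        · rw [hkey, mul_assoc]
          exact mul_le_mul_of_nonneg_left hk2 hβ.le
      | succ L hL ih =>
        obtain ⟨c, C, δ, hc, hcC, hδ, hδ2, hb⟩ := ih
        have hC : 0 < C := lt_of_lt_of_le hc hcC
        refine ⟨c, C + α ^ 2 / (1 + α ^ 2) * (Real.sqrt 2 / 3), min δ (1 / (4 * C ^ 2)),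
          hc, by nlinarith, lt_min hδ (by positivity),
          le_trans (min_le_left _ _) hδ2, ?_⟩
        intro t ht htδ
        have ht1 : t < δ := lt_of_lt_of_le htδ (min_le_left _ _)
        have ht2 : t < 1 / (4 * C ^ 2) := lt_of_lt_of_le htδ (min_le_right _ _)
        obtain ⟨hlo, hhi⟩ := hb t ht ht1
        set e := fcRes α L t - (1 - t) with he
        set s := t - e with hs
        have h32 : t ^ ((3:ℝ)/2) = t * Real.sqrt t := by
          rw [Real.sqrt_eq_rpow, show ((3:ℝ)/2) = 1 + 1/2 by norm_num,
            Real.rpow_add ht, Real.rpow_one]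
        have hsqt : Real.sqrt t * Real.sqrt t = t := Real.mul_self_sqrt ht.le
        have hCt : C * Real.sqrt t < 1 := by
          have h4 : t * (4 * C ^ 2) < 1 := (lt_div_iff₀ (by positivity)).mp ht2
          nlinarith [Real.sqrt_nonneg t]
        have hs_pos : 0 < s := by
          rw [hs]
          have : e ≤ C * (t * Real.sqrt t) := by rw [← h32]; exact hhi
          nlinarith [Real.sqrt_nonneg t]
        have he_pos : 0 < e := lt_of_lt_of_le (by positivity) hlo
        have hst : s ≤ t := by rw [hs]; linarith
        have hs12 : s ≤ 1/2 := le_trans hst (le_trans ht1.le hδ2)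
        have hF : fcRes α L t = 1 - s := by rw [hs, he]; ring
        have he2 : e = t - s := by rw [hs]; ring
        have hkey : fcRes α (L + 1) t - (1 - t)
            = e + α ^ 2 / (1 + α ^ 2) * (kappa1 (1 - s) - (1 - s)) := by
          show (1 / (1 + α ^ 2)) * (fcRes α L t + α ^ 2 * kappa1 (fcRes α L t)) - (1 - t) = _
          rw [hF, he2]
          field_simp
          ring
        obtain ⟨hk1, hk2⟩ := kappa_bounds hs_pos hs12
        have hs32 : s ^ ((3:ℝ)/2) ≤ t ^ ((3:ℝ)/2) :=
          Real.rpow_le_rpow hs_pos.le hst (by norm_num)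
        constructor
        · rw [hkey]
          have h1 : 0 ≤ α ^ 2 / (1 + α ^ 2) * (kappa1 (1 - s) - (1 - s)) :=
            mul_nonneg hβ.le (le_trans (by positivity) hk1)
          linarith
        · rw [hkey]
          have h1 : α ^ 2 / (1 + α ^ 2) * (kappa1 (1 - s) - (1 - s))
              ≤ α ^ 2 / (1 + α ^ 2) * (Real.sqrt 2 / 3 * t ^ ((3:ℝ)/2)) := by
            apply mul_le_mul_of_nonneg_left _ hβ.le
            exact hk2.trans (mul_le_mul_of_nonneg_left hs32 (by positivity))
          have h2 : (C + α ^ 2 / (1 + α ^ 2) * (Real.sqrt 2 / 3)) * t ^ ((3:ℝ)/2)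
              = C * t ^ ((3:ℝ)/2)
                + α ^ 2 / (1 + α ^ 2) * (Real.sqrt 2 / 3 * t ^ ((3:ℝ)/2)) := by ring
          rw [h2]
          linarith
    intro L hL
    obtain ⟨c, C, δ, hc, hcC, hδ, _, hb⟩ := main L hL
    exact ⟨c, C, δ, hc, hcC, hδ, hb⟩
end
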